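/- arXiv:1803.01989 — 3 statements merged into one kernel-verified Lean document; each statement's English description precedes it below -/
import Mathlib

section
/- Let u, v be positive integers with u ≥ 2, (u−v)/2 ∈ ℤ, gcd((u−v)/2, v) = 1, and let 1 ≤ r ≤ u−1, 1 ≤ s ≤ v−1 with r − s even. Define q_{r,s} = ((vr − us)²)/(8v²) − 1/2. Then 1 + 2q_{r,s} = ((vr − us)/(2v))² and (vr − us)/(2v) is not an integer. -/
/-- For `u ≥ 2`, `v ≥ 1` with `(u−v)/2 ∈ ℤ` and `gcd((u−v)/2, v) = 1`, and
`1 ≤ r ≤ u−1`, `1 ≤ s ≤ v−1` with `r − s` even, setting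
`q_{r,s} = (vr − us)²/(8v²) − 1/2`, one has `1 + 2q_{r,s} = ((vr − us)/(2v))²` and
`(vr − us)/(2v)` is not an integer. -/
theorem stmt11 (u v w : ℤ) (hu : 2 ≤ u) (hv : 1 ≤ v)
    (hw : u - v = 2 * w) (hcop : IsCoprime w v)
    (r s : ℤ) (hr : 1 ≤ r) (hr' : r ≤ u - 1) (hs : 1 ≤ s) (hs' : s ≤ v - 1)
    (heven : Even (r - s)) :
    1 + 2 * ((((v : ℚ) * r - u * s) ^ 2) / (8 * v ^ 2) - 1/2)
        = (((v : ℚ) * r - u * s) / (2 * v)) ^ 2 ∧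
    ¬ ∃ n : ℤ, ((v : ℚ) * r - u * s) / (2 * v) = (n : ℚ) := by
  have hv0 : (v : ℚ) ≠ 0 := by positivity
  constructor
  · field_simp
    ring
  · rintro ⟨n, hn⟩
    rw [div_eq_iff (by positivity)] at hn
    have hZ : v * r - u * s = n * (2 * v) := by exact_mod_cast hn
    obtain ⟨m, hm⟩ := heven
    have h2 : 2 * (w * s) = 2 * (v * (m - n)) := by linear_combination -hZ - s * hw + v * hm
    have hws : w * s = v * (m - n) := by linarith
    have hdvd : v ∣ w * s := ⟨m - n, hws⟩
    have hvs : v ∣ s := (hcop.symm).dvd_of_dvd_mul_left hdvd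
    have := Int.le_of_dvd (by omega) hvs
    omega
end

section
/- Fix u, v positive integers with u ≥ 2 and uv ≠ 0, and set k = u/(2v) − 3/2, c = k/(k + 3/2) = 1 − 3v²/(uv), Δ^NS_{r,s} = (σ_{r,s}² − 1/4)/(4(k + 3/2)) with σ_{r,s} = (vr − us)/(2v), and Δ^{N=1}_{r,s} = ((vr−us)² − (v−u)²)/(8uv) + (1 − (−1)^{r−s})/32, c^{N=1} = 3/2 − 3(v−u)²/(uv). Then for all integers r, s with r − s odd: Δ^NS_{r,s} − c/24 + 1/24 = Δ^{N=1}_{r,s} − c^{N=1}/24. -/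
/-- The conformal-weight identity relating Neveu-Schwarz admissible-level osp(1|2) data
to N=1 superconformal minimal model data: with `k = u/(2v) − 3/2` (so `k + 3/2 = u/(2v)`),
`σ_{r,s} = (vr−us)/(2v)`, `Δ^NS_{r,s} = (σ_{r,s}² − 1/4)/(4(k+3/2))`,
`c = 1 − 3v²/(uv)`, `Δ^{N=1}_{r,s} = ((vr−us)² − (v−u)²)/(8uv) + (1 − (−1)^{r−s})/32` and
`c^{N=1} = 3/2 − 3(v−u)²/(uv)`, one has, for `r − s` odd,
`Δ^NS_{r,s} − c/24 + 1/24 = Δ^{N=1}_{r,s} − c^{N=1}/24`. -/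
theorem stmt13 (u v : ℤ) (hu : 2 ≤ u) (hv : 1 ≤ v) :
    ∀ r s : ℤ, Odd (r - s) →
      ((((v : ℚ) * r - u * s) / (2 * v)) ^ 2 - 1/4) / (4 * ((u : ℚ) / (2 * v)))
          - (1 - 3 * (v : ℚ) ^ 2 / (u * v)) / 24 + 1/24
        = (((v : ℚ) * r - u * s) ^ 2 - ((v : ℚ) - u) ^ 2) / (8 * u * v)
            + (1 - (-1 : ℚ) ^ (r - s)) / 32
          - (3/2 - 3 * ((v : ℚ) - u) ^ 2 / (u * v)) / 24 := by
  intro r s hrs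
  have hO : (-1 : ℚ) ^ (r - s) = -1 := Odd.neg_one_zpow hrs
  have hu0 : (u : ℚ) ≠ 0 := Int.cast_ne_zero.mpr (by omega)
  have hv0 : (v : ℚ) ≠ 0 := Int.cast_ne_zero.mpr (by omega)
  rw [hO]
  field_simp
  ring
end

section
/- Let V be a vector space with basis {v_μ : μ ∈ λ + 2ℤ} for some λ ∈ ℂ, carrying the sl₂-action e v_μ = γ_μ v_{μ+2}, h v_μ = μ v_μ, f v_μ = v_{μ−2} with γ_μ = (1/2)(q − μ²/2 − μ). Then V is a simple sl₂-module if and only if γ_μ ≠ 0 for all μ ∈ λ + 2ℤ, i.e., if and only if no μ ∈ λ + 2ℤ satisfies μ²/2 + μ = q. -/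
open Finsupp

/-- `e v_μ = γ_μ v_{μ+2}` with `γ_μ = (1/2)(q − μ²/2 − μ)`, indexed by `n : ℤ` with
`μ = lam + 2n`. -/
noncomputable def opE (lam q : ℂ) : (ℤ →₀ ℂ) →ₗ[ℂ] (ℤ →₀ ℂ) :=
  Finsupp.lsum ℂ fun n => LinearMap.toSpanSingleton ℂ _
    (((1/2 : ℂ) * (q - ((lam + 2*n)^2/2 + (lam + 2*n)))) • Finsupp.single (n+1) 1)

/-- `h v_μ = μ v_μ`. -/
noncomputable def opH (lam : ℂ) : (ℤ →₀ ℂ) →ₗ[ℂ] (ℤ →₀ ℂ) :=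
  Finsupp.lsum ℂ fun n => LinearMap.toSpanSingleton ℂ _
    ((lam + 2*n) • Finsupp.single n 1)

/-- `f v_μ = v_{μ−2}`. -/
noncomputable def opF : (ℤ →₀ ℂ) →ₗ[ℂ] (ℤ →₀ ℂ) :=
  Finsupp.lsum ℂ fun n => LinearMap.toSpanSingleton ℂ _ (Finsupp.single (n-1) 1)


noncomputable def gam (lam q : ℂ) (n : ℤ) : ℂ := (1/2 : ℂ) * (q - ((lam + 2*n)^2/2 + (lam + 2*n)))

lemma opE_single (lam q : ℂ) (n : ℤ) (c : ℂ) :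
    opE lam q (single n c) = (c * gam lam q n) • single (n+1) 1 := by
  rw [opE, Finsupp.lsum_single, LinearMap.toSpanSingleton_apply, gam, smul_smul]

lemma opH_single (lam : ℂ) (n : ℤ) (c : ℂ) :
    opH lam (single n c) = (c * (lam + 2*n)) • single n 1 := by
  rw [opH, Finsupp.lsum_single, LinearMap.toSpanSingleton_apply, smul_smul]

lemma opF_single (n : ℤ) (c : ℂ) :
    opF (single n c) = c • single (n-1) 1 := by
  rw [opF, Finsupp.lsum_single, LinearMap.toSpanSingleton_apply]

lemma single_smul_one (n : ℤ) (c : ℂ) : c • single n (1:ℂ) = single n c := by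
  rw [Finsupp.smul_single, smul_eq_mul, mul_one]

lemma opE_apply (lam q : ℂ) (w : ℤ →₀ ℂ) (k : ℤ) :
    opE lam q w k = gam lam q (k-1) * w (k-1) := by
  induction w using Finsupp.induction_linear with
  | zero => simp only [map_zero, Finsupp.coe_zero, Pi.zero_apply, mul_zero]
  | add f g hf hg =>
    simp only [map_add, Finsupp.add_apply, hf, hg]; ring
  | single n c =>
    rw [opE_single, single_smul_one]
    simp only [Finsupp.single_apply]
    rcases eq_or_ne k (n+1) with rfl | h
    · simp only [if_pos rfl, if_pos (by omega : n = n + 1 - 1), if_true]; ring_nf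
    · rw [if_neg (by omega : ¬ n + 1 = k), if_neg (by omega : ¬ n = k - 1), mul_zero]

lemma opH_apply (lam : ℂ) (w : ℤ →₀ ℂ) (k : ℤ) :
    opH lam w k = (lam + 2*k) * w k := by
  induction w using Finsupp.induction_linear with
  | zero => simp only [map_zero, Finsupp.coe_zero, Pi.zero_apply, mul_zero]
  | add f g hf hg =>
    simp only [map_add, Finsupp.add_apply, hf, hg]; ring
  | single n c =>
    rw [opH_single, single_smul_one]
    simp only [Finsupp.single_apply]
    rcases eq_or_ne k n with rfl | h
    · simp only [if_pos rfl, if_true]; ring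
    · rw [if_neg (Ne.symm h), if_neg (Ne.symm h), mul_zero]

lemma opF_apply (w : ℤ →₀ ℂ) (k : ℤ) : opF w k = w (k+1) := by
  induction w using Finsupp.induction_linear with
  | zero => simp only [map_zero, Finsupp.coe_zero, Pi.zero_apply]
  | add f g hf hg =>
    simp only [map_add, Finsupp.add_apply, hf, hg]
  | single n c =>
    rw [opF_single, single_smul_one]
    simp only [Finsupp.single_apply]
    rcases eq_or_ne k (n-1) with rfl | h
    · rw [if_pos rfl, if_pos (by omega : n = n - 1 + 1)]
    · rw [if_neg (by omega : ¬ n - 1 = k), if_neg (by omega : ¬ n = k + 1)]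

lemma extract (lam : ℂ) (W : Submodule ℂ (ℤ →₀ ℂ)) (hH : ∀ w ∈ W, opH lam w ∈ W) :
    ∀ N : ℕ, ∀ w ∈ W, w ≠ 0 → w.support.card ≤ N → ∃ n : ℤ, single n (1:ℂ) ∈ W := by
  intro N
  induction N with
  | zero =>
    intro w _ hw0 hcard
    exact absurd (Finsupp.support_eq_empty.mp (Finset.card_eq_zero.mp (Nat.le_zero.mp hcard))) hw0
  | succ N ih =>
    intro w hwW hw0 hcard
    obtain ⟨n, hn⟩ := Finsupp.support_nonempty_iff.mpr hw0
    have hwn : w n ≠ 0 := Finsupp.mem_support_iff.mp hn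
    by_cases hsub : w.support ⊆ {n}
    · have hw : w = single n (w n) := Finsupp.support_subset_singleton.mp hsub
      set c := w n with hc
      refine ⟨n, ?_⟩
      have h1 : c⁻¹ • w ∈ W := W.smul_mem _ hwW
      rw [hw, Finsupp.smul_single, smul_eq_mul, inv_mul_cancel₀ hwn] at h1
      exact h1
    · obtain ⟨m, hm, hmn⟩ : ∃ m ∈ w.support, m ≠ n := by
        by_contra h; push_neg at h
        exact hsub fun x hx => Finset.mem_singleton.mpr (h x hx)
      set w' := opH lam w - (lam + 2*m) • w with hw'
      have hw'W : w' ∈ W := W.sub_mem (hH w hwW) (W.smul_mem _ hwW)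
      have hcoord : ∀ k, w' k = (2*k - 2*m) * w k := by
        intro k
        rw [hw']
        simp only [Finsupp.sub_apply, Finsupp.smul_apply, smul_eq_mul, opH_apply]
        ring
      have hne : w' ≠ 0 := by
        intro h0
        have h1 := hcoord n
        rw [h0] at h1
        simp only [Finsupp.coe_zero, Pi.zero_apply] at h1
        have h2 : (2*(n:ℂ) - 2*m) ≠ 0 := by
          intro h3
          have : (n:ℂ) = m := by linear_combination h3/2
          exact hmn (by exact_mod_cast this.symm)
        exact (mul_ne_zero h2 hwn) h1.symm
      have hsupp : w'.support ⊆ w.support.erase m := by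
        intro k hk
        rw [Finsupp.mem_support_iff] at hk
        rw [Finset.mem_erase, Finsupp.mem_support_iff]
        have h1 := hcoord k
        constructor
        · rintro rfl; exact hk (by rw [h1]; ring)
        · intro h2; exact hk (by rw [h1, h2, mul_zero])
      have hcard' : w'.support.card ≤ N := by
        have h1 := Finset.card_le_card hsupp
        have h2 := Finset.card_erase_of_mem hm
        have h3 : 1 ≤ w.support.card := Finset.card_pos.mpr ⟨n, hn⟩
        omega
      exact ih w' hw'W hne hcard'

lemma allSingles (lam q : ℂ) (hγ : ∀ n : ℤ, gam lam q n ≠ 0) (W : Submodule ℂ (ℤ →₀ ℂ))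
    (hW : ∀ w ∈ W, opE lam q w ∈ W ∧ opF w ∈ W) (n : ℤ) (hn : single n (1:ℂ) ∈ W) :
    ∀ m : ℤ, single m (1:ℂ) ∈ W := by
  have up : ∀ k : ℕ, single (n + k) (1:ℂ) ∈ W := by
    intro k
    induction k with
    | zero => simpa using hn
    | succ k ih =>
      have h1 := (hW _ ih).1
      rw [opE_single, one_mul] at h1
      have h2 := W.smul_mem (gam lam q (n + k))⁻¹ h1
      rw [smul_smul, inv_mul_cancel₀ (hγ _), one_smul] at h2
      have h3 : n + ((k+1 : ℕ) : ℤ) = n + (k:ℤ) + 1 := by push_cast; ring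
      rw [h3]
      exact h2
  have down : ∀ k : ℕ, single (n - k) (1:ℂ) ∈ W := by
    intro k
    induction k with
    | zero => simpa using hn
    | succ k ih =>
      have h1 := (hW _ ih).2
      rw [opF_single, one_smul] at h1
      have h3 : n - ((k+1 : ℕ) : ℤ) = n - (k:ℤ) - 1 := by push_cast; ring
      rw [h3]
      exact h1
  intro m
  rcases le_total n m with h | h
  · have h1 : m = n + ((m - n).toNat : ℤ) := by omega
    rw [h1]; exact up _
  · have h1 : m = n - ((n - m).toNat : ℤ) := by omega
    rw [h1]; exact down _


/-- The dense module `C_{λ,q}` with basis `{v_μ : μ ∈ λ + 2ℤ}` and sl₂-action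
`e v_μ = γ_μ v_{μ+2}`, `h v_μ = μ v_μ`, `f v_μ = v_{μ−2}` is simple (the only subspaces
invariant under `e`, `h`, `f` are `⊥` and `⊤`) if and only if `γ_μ ≠ 0` for all
`μ ∈ λ + 2ℤ`, i.e. iff no `μ ∈ λ + 2ℤ` satisfies `μ²/2 + μ = q`. -/
theorem stmt19 (lam q : ℂ) :
    (∀ W : Submodule ℂ (ℤ →₀ ℂ),
        (∀ w ∈ W, opE lam q w ∈ W ∧ opH lam w ∈ W ∧ opF w ∈ W) → W = ⊥ ∨ W = ⊤)
      ↔ ∀ n : ℤ, (1/2 : ℂ) * (q - ((lam + 2*n)^2/2 + (lam + 2*n))) ≠ 0 := by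
  constructor
  · intro hsimple n hγ0
    have hγ : gam lam q n = 0 := hγ0
    set W := Finsupp.supported ℂ ℂ {m : ℤ | m ≤ n} with hWdef
    have hinv : ∀ w ∈ W, opE lam q w ∈ W ∧ opH lam w ∈ W ∧ opF w ∈ W := by
      intro w hw
      rw [hWdef, Finsupp.mem_supported'] at hw
      refine ⟨?_, ?_, ?_⟩ <;> rw [hWdef, Finsupp.mem_supported'] <;> intro k hk <;>
        simp only [Set.mem_setOf_eq, not_le] at hk
      · rw [opE_apply]
        rcases eq_or_ne (k-1) n with he | he
        · rw [he, hγ, zero_mul]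
        · rw [hw (k-1) (by simp only [Set.mem_setOf_eq]; omega), mul_zero]
      · rw [opH_apply, hw k (by simp only [Set.mem_setOf_eq]; omega), mul_zero]
      · rw [opF_apply]
        exact hw (k+1) (by simp only [Set.mem_setOf_eq]; omega)
    rcases hsimple W hinv with hbot | htop
    · have hmem : single n (1:ℂ) ∈ W := by
        rw [hWdef, Finsupp.mem_supported']
        intro k hk
        simp only [Set.mem_setOf_eq, not_le] at hk
        rw [Finsupp.single_apply, if_neg (by omega)]
      rw [hbot, Submodule.mem_bot] at hmem
      have h2 : (single n (1:ℂ)) n = 0 := by rw [hmem]; rfl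
      rw [Finsupp.single_apply, if_pos rfl] at h2
      exact one_ne_zero h2
    · have hmem : single (n+1) (1:ℂ) ∈ W := htop ▸ Submodule.mem_top
      rw [hWdef, Finsupp.mem_supported'] at hmem
      have := hmem (n+1) (by simp)
      rw [Finsupp.single_apply, if_pos rfl] at this
      exact one_ne_zero this
  · intro hγ W hW
    by_cases hbot : W = ⊥
    · left; exact hbot
    · right
      obtain ⟨w, hwW, hw0⟩ := Submodule.ne_bot_iff W |>.mp hbot
      obtain ⟨n, hn⟩ := extract lam W (fun w hw => (hW w hw).2.1)
        w.support.card w hwW hw0 le_rfl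
      have hall := allSingles lam q (fun n => hγ n) W
        (fun w hw => ⟨(hW w hw).1, (hW w hw).2.2⟩) n hn
      rw [eq_top_iff]
      intro x _
      rw [← Finsupp.sum_single x]
      refine Submodule.finsuppSum_mem (R := ℂ) (M := ℤ →₀ ℂ) W x (fun k c => single k c) fun k hk => ?_
      show single k (x k) ∈ W
      rw [← single_smul_one]
      exact W.smul_mem _ (hall k)
end
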